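/- arXiv:1803.07948 — 2 statements merged into one kernel-verified Lean document; each statement's English description precedes it below -/
import Mathlib

section
/- Let Γ₁ and Γ₂ be cofinite C-convex regions in the closed positive orthant C ⊆ ℝⁿ, and let λ₁, λ₂ > 0 be real numbers. Then the Minkowski combination λ₁Γ₁ + λ₂Γ₂ is cofinite, i.e. the set C \ (λ₁Γ₁ + λ₂Γ₂) has finite Lebesgue measure. -/
open MeasureTheory Pointwise

noncomputable section

/-- The closed positive orthant `C = {x : ∀ i, 0 ≤ x i}` in `ℝⁿ`. -/
def posOrthant (n : ℕ) : Set (Fin n → ℝ) := {x | ∀ i, 0 ≤ x i}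

/-- A `C`-convex region: a closed convex subset `Γ ⊆ C` with `Γ + C ⊆ Γ`. -/
def IsCConvexRegion (n : ℕ) (Γ : Set (Fin n → ℝ)) : Prop :=
  IsClosed Γ ∧ Convex ℝ Γ ∧ Γ ⊆ posOrthant n ∧
    ∀ x ∈ Γ, ∀ y ∈ posOrthant n, x + y ∈ Γ

/-- `Γ` is cofinite if `C \ Γ` has finite Lebesgue measure. -/
def IsCofinite (n : ℕ) (Γ : Set (Fin n → ℝ)) : Prop :=
  volume (posOrthant n \ Γ) < ⊤

/-- The covolume of `Γ`: the Lebesgue measure of `C \ Γ` (as a real number). -/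
def covol (n : ℕ) (Γ : Set (Fin n → ℝ)) : ℝ :=
  (volume (posOrthant n \ Γ)).toReal

/-- The mixed covolume of `Γ₁, …, Γₙ`, defined by the polarization formula
`Covol(Γ₁, …, Γₙ) = (1/n!) Σ_{∅ ≠ S ⊆ {1,…,n}} (−1)^{n−|S|} Covol(Σ_{i∈S} Γᵢ)`,
where `Σ_{i∈S} Γᵢ` is the Minkowski sum. -/
def mixedCovol (n : ℕ) (Γ : Fin n → Set (Fin n → ℝ)) : ℝ :=
  (1 / n.factorial : ℝ) *
    ∑ S ∈ Finset.univ.powerset.filter (fun S : Finset (Fin n) => S.Nonempty),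
      (-1 : ℝ) ^ (n - S.card) * covol n (∑ i ∈ S, Γ i)

/-- The Minkowski combination `λ₁Γ₁ + λ₂Γ₂` of cofinite `C`-convex regions is
cofinite: `C \ (λ₁Γ₁ + λ₂Γ₂)` has finite Lebesgue measure. -/
theorem minkowski_combination_cofinite
    (n : ℕ) (Γ₁ Γ₂ : Set (Fin n → ℝ))
    (h₁conv : IsCConvexRegion n Γ₁) (h₂conv : IsCConvexRegion n Γ₂)
    (h₁cof : IsCofinite n Γ₁) (h₂cof : IsCofinite n Γ₂)
    (l₁ l₂ : ℝ) (hl₁ : 0 < l₁) (hl₂ : 0 < l₂) :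
    volume (posOrthant n \ (l₁ • Γ₁ + l₂ • Γ₂)) < ⊤ := by
  set μ : ℝ := l₁ + l₂ with hμdef
  have hμ : 0 < μ := by positivity
  have hsub : posOrthant n \ (l₁ • Γ₁ + l₂ • Γ₂) ⊆
      μ • ((posOrthant n \ Γ₁) ∪ (posOrthant n \ Γ₂)) := by
    rintro x ⟨hxC, hx⟩
    rw [Set.mem_smul_set_iff_inv_smul_mem₀ hμ.ne']
    have hxC' : μ⁻¹ • x ∈ posOrthant n := by
      intro i
      have := hxC i
      have : 0 ≤ μ⁻¹ * x i := mul_nonneg (inv_nonneg.2 hμ.le) this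
      simpa using this
    by_cases h1 : μ⁻¹ • x ∈ Γ₁
    · by_cases h2 : μ⁻¹ • x ∈ Γ₂
      · exfalso
        apply hx
        refine ⟨l₁ • (μ⁻¹ • x), Set.smul_mem_smul_set h1,
          l₂ • (μ⁻¹ • x), Set.smul_mem_smul_set h2, ?_⟩
        show l₁ • μ⁻¹ • x + l₂ • μ⁻¹ • x = x
        rw [← add_smul, ← hμdef, smul_smul, mul_inv_cancel₀ hμ.ne', one_smul]
      · exact Or.inr ⟨hxC', h2⟩
    · exact Or.inl ⟨hxC', h1⟩
  calc volume (posOrthant n \ (l₁ • Γ₁ + l₂ • Γ₂))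
      ≤ volume (μ • ((posOrthant n \ Γ₁) ∪ (posOrthant n \ Γ₂))) := measure_mono hsub
    _ = ENNReal.ofReal (μ ^ Module.finrank ℝ (Fin n → ℝ)) *
        volume ((posOrthant n \ Γ₁) ∪ (posOrthant n \ Γ₂)) :=
        Measure.addHaar_smul_of_nonneg volume hμ.le _
    _ < ⊤ := by
        apply ENNReal.mul_lt_top ENNReal.ofReal_lt_top
        exact lt_of_le_of_lt (measure_union_le _ _) (ENNReal.add_lt_top.2 ⟨h₁cof, h₂cof⟩)
end
end

section
/- Let n ≥ 1 and let Γ₁, Γ₂ be cofinite C-convex regions in the closed positive orthant C ⊆ ℝⁿ. Then the reversed (complemented) Brunn–Minkowski inequality holds for covolumes: Covol(Γ₁ + Γ₂)^{1/n} ≤ Covol(Γ₁)^{1/n} + Covol(Γ₂)^{1/n}, where Covol(Γ₁ + Γ₂) denotes the Lebesgue measure of C \ (Γ₁ + Γ₂). -/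
open MeasureTheory Pointwise Set
open scoped ENNReal

noncomputable section

namespace RBM

variable {m : ℕ} {Γ Γ₁ Γ₂ : Set (Fin (m+1) → ℝ)}

/-- direction vector over base point `y`. -/
def dir (m : ℕ) (y : Fin m → ℝ) : Fin (m+1) → ℝ := Fin.snoc y 1

lemma dir_nonneg {y : Fin m → ℝ} (hy : y ∈ posOrthant m) (i : Fin (m+1)) :
    0 ≤ dir m y i := by
  induction i using Fin.lastCases with
  | last => simp [dir]
  | cast j => simpa [dir] using hy j

lemma smul_dir_mem {y : Fin m → ℝ} (hy : y ∈ posOrthant m) {t : ℝ} (ht : 0 ≤ t) :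
    t • dir m y ∈ posOrthant (m+1) :=
  fun i => mul_nonneg ht (dir_nonneg hy i)

/-- hitting time set of the ray through `dir m y`. -/
def T (Γ : Set (Fin (m+1) → ℝ)) (y : Fin m → ℝ) : Set ℝ :=
  {t | 0 ≤ t ∧ t • dir m y ∈ Γ}

lemma T_upclosed (hΓ : IsCConvexRegion (m+1) Γ) {y : Fin m → ℝ} (hy : y ∈ posOrthant m)
    {s t : ℝ} (hs : s ∈ T Γ y) (hst : s ≤ t) : t ∈ T Γ y := by
  refine ⟨le_trans hs.1 hst, ?_⟩
  have h : t • dir m y = s • dir m y + (t - s) • dir m y := by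
    rw [← add_smul, add_sub_cancel]
  rw [h]
  exact hΓ.2.2.2 _ hs.2 _ (smul_dir_mem hy (by linarith))

lemma T_closed (hΓ : IsCConvexRegion (m+1) Γ) (y : Fin m → ℝ) : IsClosed (T Γ y) := by
  have : T Γ y = {t : ℝ | 0 ≤ t} ∩ (fun t : ℝ => t • dir m y) ⁻¹' Γ := rfl
  rw [this]
  exact (isClosed_le continuous_const continuous_id).inter
    (hΓ.1.preimage (continuous_id.smul continuous_const))

open scoped Classical in
def rad (Γ : Set (Fin (m+1) → ℝ)) (y : Fin m → ℝ) : ℝ≥0∞ :=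
  if y ∈ posOrthant m then sInf (ENNReal.ofReal '' T Γ y) else 0

lemma rad_eq_of_nonempty (hΓ : IsCConvexRegion (m+1) Γ) {y : Fin m → ℝ}
    (hy : y ∈ posOrthant m) (hne : (T Γ y).Nonempty) :
    rad Γ y = ENNReal.ofReal (sInf (T Γ y)) ∧ sInf (T Γ y) ∈ T Γ y := by
  have hbdd : BddBelow (T Γ y) := ⟨0, fun s hs => hs.1⟩
  have hmem : sInf (T Γ y) ∈ T Γ y := (T_closed hΓ y).csInf_mem hne hbdd
  refine ⟨?_, hmem⟩
  rw [rad, if_pos hy]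
  refine le_antisymm (sInf_le (mem_image_of_mem _ hmem)) (le_sInf ?_)
  rintro b ⟨s, hs, rfl⟩
  exact ENNReal.ofReal_le_ofReal (csInf_le hbdd hs)

lemma T_nonempty_of_ne_top {y : Fin m → ℝ} (hy : y ∈ posOrthant m) (hfin : rad Γ y ≠ ⊤) :
    (T Γ y).Nonempty := by
  by_contra hE
  rw [not_nonempty_iff_eq_empty] at hE
  rw [rad, if_pos hy, hE, image_empty, sInf_empty] at hfin
  exact hfin rfl

lemma lt_rad_iff (hΓ : IsCConvexRegion (m+1) Γ) {y : Fin m → ℝ} {t : ℝ} (ht : 0 ≤ t) :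
    ENNReal.ofReal t < rad Γ y ↔ y ∈ posOrthant m ∧ t • dir m y ∉ Γ := by
  by_cases hy : y ∈ posOrthant m
  · constructor
    · intro h
      refine ⟨hy, fun hmem => ?_⟩
      have : rad Γ y ≤ ENNReal.ofReal t := by
        rw [rad, if_pos hy]
        exact sInf_le (mem_image_of_mem _ ⟨ht, hmem⟩)
      exact absurd this (not_le.mpr h)
    · rintro ⟨-, hnot⟩
      by_contra hle
      push_neg at hle
      have hfin : rad Γ y ≠ ⊤ := ne_top_of_le_ne_top ENNReal.ofReal_ne_top hle
      have hne := T_nonempty_of_ne_top hy hfin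
      obtain ⟨heq, hmem⟩ := rad_eq_of_nonempty hΓ hy hne
      rw [heq] at hle
      have hρt : sInf (T Γ y) ≤ t := (ENNReal.ofReal_le_ofReal_iff ht).mp hle
      exact hnot (T_upclosed hΓ hy hmem hρt).2
  · rw [rad, if_neg hy]
    simp [hy]

lemma rad_toReal_mem (hΓ : IsCConvexRegion (m+1) Γ) {y : Fin m → ℝ}
    (hy : y ∈ posOrthant m) (hfin : rad Γ y ≠ ⊤) :
    0 ≤ (rad Γ y).toReal ∧ (rad Γ y).toReal • dir m y ∈ Γ := by
  have hne := T_nonempty_of_ne_top hy hfin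
  obtain ⟨heq, hmem⟩ := rad_eq_of_nonempty hΓ hy hne
  refine ⟨ENNReal.toReal_nonneg, ?_⟩
  have : (rad Γ y).toReal = sInf (T Γ y) := by
    rw [heq, ENNReal.toReal_ofReal hmem.1]
  rw [this]
  exact hmem.2


lemma isClosed_posOrthant (k : ℕ) : IsClosed (posOrthant k) := by
  have h : posOrthant k = ⋂ i, {x : Fin k → ℝ | 0 ≤ x i} := by
    ext x; simp [posOrthant, mem_iInter]
  rw [h]
  exact isClosed_iInter fun i => isClosed_le continuous_const (continuous_apply i)

lemma continuous_smul_dir (c : ℝ) : Continuous (fun y : Fin m → ℝ => c • dir m y) := by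
  refine Continuous.const_smul ?_ c
  refine continuous_pi fun i => ?_
  induction i using Fin.lastCases with
  | last => simpa [dir] using continuous_const
  | cast j => simpa [dir] using continuous_apply j

lemma measurable_rad (hΓ : IsCConvexRegion (m+1) Γ) : Measurable (rad Γ) := by
  apply measurable_of_Ioi
  intro c
  rcases eq_or_ne c ⊤ with rfl | hc
  · simp
  · have hset : rad Γ ⁻¹' Ioi c =
        posOrthant m ∩ ((fun y => c.toReal • dir m y) ⁻¹' Γ)ᶜ := by
      ext y
      simp only [mem_preimage, mem_Ioi, mem_inter_iff, mem_compl_iff]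
      nth_rewrite 1 [← ENNReal.ofReal_toReal hc]
      exact lt_rad_iff hΓ ENNReal.toReal_nonneg
    rw [hset]
    exact (isClosed_posOrthant m).measurableSet.inter
      (hΓ.1.preimage (continuous_smul_dir _)).measurableSet.compl

lemma smul_dir_eq_snoc {t : ℝ} (ht : t ≠ 0) (z : Fin m → ℝ) :
    t • dir m (t⁻¹ • z) = Fin.snoc z t := by
  funext i
  induction i using Fin.lastCases with
  | last => simp [dir]
  | cast j =>
    simp only [dir, Pi.smul_apply, smul_eq_mul, Fin.snoc_castSucc]
    field_simp

/-- Exact fiber characterization for a closed C-convex region. -/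
lemma snoc_mem_diff_iff (hΓ : IsCConvexRegion (m+1) Γ) {t : ℝ} (ht : 0 < t) (z : Fin m → ℝ) :
    Fin.snoc z t ∈ posOrthant (m+1) \ Γ ↔ ENNReal.ofReal t < rad Γ (t⁻¹ • z) := by
  rw [lt_rad_iff hΓ ht.le, smul_dir_eq_snoc ht.ne' z]
  constructor
  · rintro ⟨hC, hΓ'⟩
    refine ⟨fun j => mul_nonneg (inv_nonneg.mpr ht.le) ?_, hΓ'⟩
    simpa using hC j.castSucc
  · rintro ⟨hy, hΓ'⟩
    refine ⟨fun i => ?_, hΓ'⟩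
    induction i using Fin.lastCases with
    | last => simpa using ht.le
    | cast j =>
      have := hy j
      simp only [Pi.smul_apply, smul_eq_mul] at this
      have hz : z j = t * (t⁻¹ * z j) := by field_simp
      rw [Fin.snoc_castSucc, hz]
      exact mul_nonneg ht.le this

/-- The measurable equivalence `ℝ^{m+1} ≃ ℝ × ℝ^m`, splitting off the last coordinate. -/
def e (m : ℕ) : (Fin (m+1) → ℝ) ≃ᵐ ℝ × (Fin m → ℝ) :=
  MeasurableEquiv.piFinSuccAbove (fun _ => ℝ) (Fin.last m)

lemma e_apply (x : Fin (m+1) → ℝ) : e m x = (x (Fin.last m), Fin.init x) := by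
  have h2 : (fun j => x ((Fin.last m).succAbove j)) = Fin.init x := by
    funext j; rw [Fin.succAbove_last]; rfl
  simp [e, MeasurableEquiv.piFinSuccAbove, Fin.insertNthEquiv, Fin.removeNth, ← h2]

lemma e_measurePreserving (m : ℕ) : MeasurePreserving (e m) volume volume :=
  volume_preserving_piFinSuccAbove (fun _ => ℝ) (Fin.last m)

/-- The model region below the graph of a radial function. -/
def S (m : ℕ) (r : (Fin m → ℝ) → ℝ≥0∞) : Set (ℝ × (Fin m → ℝ)) :=
  {p | 0 < p.1 ∧ ENNReal.ofReal p.1 < r (p.1⁻¹ • p.2)}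

lemma measurableSet_S {r : (Fin m → ℝ) → ℝ≥0∞} (hr : Measurable r) :
    MeasurableSet (S m r) := by
  have h : S m r = {p : ℝ × (Fin m → ℝ) | 0 < p.1} ∩
      {p : ℝ × (Fin m → ℝ) | ENNReal.ofReal p.1 < r (p.1⁻¹ • p.2)} := rfl
  rw [h]
  refine (measurableSet_lt measurable_const measurable_fst).inter ?_
  exact measurableSet_lt (ENNReal.measurable_ofReal.comp measurable_fst)
    (hr.comp ((measurable_fst.inv).smul measurable_snd))

lemma slab_volume (m : ℕ) : volume {x : Fin (m+1) → ℝ | x (Fin.last m) = 0} = 0 := by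
  have h : {x : Fin (m+1) → ℝ | x (Fin.last m) = 0} = e m ⁻¹' ({(0:ℝ)} ×ˢ (univ : Set (Fin m → ℝ))) := by
    ext x; simp [e_apply, eq_comm]
  rw [h, (e_measurePreserving m).measure_preimage_equiv, Measure.volume_eq_prod, Measure.prod_prod]
  simp

lemma preimage_S_eq (hΓ : IsCConvexRegion (m+1) Γ) :
    e m ⁻¹' S m (rad Γ) = (posOrthant (m+1) \ Γ) ∩ {x | 0 < x (Fin.last m)} := by
  ext x
  simp only [mem_preimage, e_apply, S, mem_setOf_eq, mem_inter_iff]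
  constructor
  · rintro ⟨ht, hlt⟩
    have := (snoc_mem_diff_iff hΓ ht (Fin.init x)).mpr hlt
    rw [Fin.snoc_init_self] at this
    exact ⟨this, ht⟩
  · rintro ⟨hx, ht⟩
    refine ⟨ht, ?_⟩
    rw [← (snoc_mem_diff_iff hΓ ht (Fin.init x)), Fin.snoc_init_self]
    exact hx

lemma volume_compl_eq (hΓ : IsCConvexRegion (m+1) Γ) :
    volume (posOrthant (m+1) \ Γ) = volume (S m (rad Γ)) := by
  apply le_antisymm
  · have hsub : posOrthant (m+1) \ Γ ⊆
        (e m ⁻¹' S m (rad Γ)) ∪ {x | x (Fin.last m) = 0} := by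
      intro x hx
      rcases lt_or_eq_of_le (hx.1 (Fin.last m)) with ht | ht
      · left; rw [preimage_S_eq hΓ]; exact ⟨hx, ht⟩
      · right; exact ht.symm
    calc volume (posOrthant (m+1) \ Γ)
        ≤ volume ((e m ⁻¹' S m (rad Γ)) ∪ {x | x (Fin.last m) = 0}) := measure_mono hsub
      _ ≤ volume (e m ⁻¹' S m (rad Γ)) + volume {x : Fin (m+1) → ℝ | x (Fin.last m) = 0} :=
          measure_union_le _ _
      _ = volume (S m (rad Γ)) := by
          rw [slab_volume, add_zero, (e_measurePreserving m).measure_preimage_equiv]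
  · rw [← (e_measurePreserving m).measure_preimage_equiv (S m (rad Γ))]
    apply measure_mono
    rw [preimage_S_eq hΓ]
    exact inter_subset_left

/-- The complement of a Minkowski sum is (a.e.) contained in the model region of the
sum of the radial functions. -/
lemma sum_subset (h₁ : IsCConvexRegion (m+1) Γ₁) (h₂ : IsCConvexRegion (m+1) Γ₂) :
    posOrthant (m+1) \ (Γ₁ + Γ₂) ⊆
      (e m ⁻¹' S m (fun y => rad Γ₁ y + rad Γ₂ y)) ∪ {x | x (Fin.last m) = 0} := by
  intro x hx
  rcases lt_or_eq_of_le (hx.1 (Fin.last m)) with ht | ht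
  swap
  · right; exact ht.symm
  left
  set t : ℝ := x (Fin.last m) with htdef
  set y : Fin m → ℝ := t⁻¹ • Fin.init x with hydef
  have hy : y ∈ posOrthant m := fun j => mul_nonneg (inv_nonneg.mpr ht.le) (hx.1 j.castSucc)
  have hxdir : x = t • dir m y := by
    rw [hydef, smul_dir_eq_snoc ht.ne', Fin.snoc_init_self]
  simp only [mem_preimage, e_apply, S, mem_setOf_eq]
  refine ⟨ht, ?_⟩
  by_contra hle
  push_neg at hle
  have hsum_fin : rad Γ₁ y + rad Γ₂ y < ⊤ := lt_of_le_of_lt hle ENNReal.ofReal_lt_top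
  have h₁fin : rad Γ₁ y ≠ ⊤ := (ENNReal.add_lt_top.mp hsum_fin).1.ne
  have h₂fin : rad Γ₂ y ≠ ⊤ := (ENNReal.add_lt_top.mp hsum_fin).2.ne
  obtain ⟨hρ₁nn, hρ₁mem⟩ := rad_toReal_mem h₁ hy h₁fin
  obtain ⟨hρ₂nn, hρ₂mem⟩ := rad_toReal_mem h₂ hy h₂fin
  set ρ₁ := (rad Γ₁ y).toReal
  set ρ₂ := (rad Γ₂ y).toReal
  have hρt : ρ₁ + ρ₂ ≤ t := by
    have : ENNReal.ofReal (ρ₁ + ρ₂) ≤ ENNReal.ofReal t := by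
      rw [ENNReal.ofReal_add hρ₁nn hρ₂nn, ENNReal.ofReal_toReal h₁fin,
        ENNReal.ofReal_toReal h₂fin]
      exact hle
    exact (ENNReal.ofReal_le_ofReal_iff ht.le).mp this
  have hx_mem : x ∈ Γ₁ + Γ₂ := by
    have hdecomp : x = ρ₁ • dir m y + (ρ₂ • dir m y + (t - ρ₁ - ρ₂) • dir m y) := by
      rw [hxdir, ← add_smul, ← add_smul]
      congr 1
      ring
    rw [hdecomp]
    exact Set.add_mem_add hρ₁mem
      (h₂.2.2.2 _ hρ₂mem _ (smul_dir_mem hy (by linarith)))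
  exact hx.2 hx_mem

lemma inner_integral (c : ℝ≥0∞) :
    ∫⁻ t in Ioi (0:ℝ), ({t : ℝ | ENNReal.ofReal t < c}.indicator
      (fun t => ENNReal.ofReal (t ^ m)) t) = c ^ (m+1) / (m+1) := by
  have hmeas : MeasurableSet {t : ℝ | ENNReal.ofReal t < c} :=
    measurableSet_lt ENNReal.measurable_ofReal measurable_const
  rw [lintegral_indicator hmeas, Measure.restrict_restrict hmeas]
  rcases eq_or_ne c ⊤ with rfl | hc
  · have hset : {t : ℝ | ENNReal.ofReal t < ⊤} ∩ Ioi 0 = Ioi 0 := by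
      ext t; simp [ENNReal.ofReal_lt_top]
    rw [hset]
    have htop : (⊤:ℝ≥0∞) ^ (m+1) / (m+1) = ⊤ := by
      rw [ENNReal.top_pow (Nat.succ_ne_zero m)]
      simp [ENNReal.div_eq_top]
    rw [htop, ← top_le_iff]
    calc (⊤:ℝ≥0∞) = volume (Ioi (1:ℝ)) := by rw [Real.volume_Ioi]
      _ = ∫⁻ t in Ioi (1:ℝ), 1 := (setLIntegral_one _).symm
      _ ≤ ∫⁻ t in Ioi (1:ℝ), ENNReal.ofReal (t ^ m) := by
          refine setLIntegral_mono (ENNReal.measurable_ofReal.comp (measurable_id.pow_const m))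
            (fun t ht => ?_)
          exact ENNReal.one_le_ofReal.mpr (one_le_pow₀ (le_of_lt ht))
      _ ≤ ∫⁻ t in Ioi (0:ℝ), ENNReal.ofReal (t ^ m) :=
          lintegral_mono' (Measure.restrict_mono (fun t (ht : 1 < t) => lt_trans one_pos ht) le_rfl) le_rfl
  · set b := c.toReal with hb
    have hbnn : 0 ≤ b := ENNReal.toReal_nonneg
    have hset : {t : ℝ | ENNReal.ofReal t < c} ∩ Ioi 0 = Ioo 0 b := by
      ext t
      simp only [mem_inter_iff, mem_setOf_eq, mem_Ioi, mem_Ioo]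
      constructor
      · rintro ⟨hlt, ht⟩
        exact ⟨ht, (ENNReal.ofReal_lt_iff_lt_toReal ht.le hc).mp hlt⟩
      · rintro ⟨ht, hlt⟩
        exact ⟨(ENNReal.ofReal_lt_iff_lt_toReal ht.le hc).mpr hlt, ht⟩
    rw [hset]
    have hint : IntegrableOn (fun t : ℝ => t ^ m) (Ioo 0 b) volume := by
      have h1 : IntervalIntegrable (fun t : ℝ => t ^ m) volume 0 b :=
        intervalIntegral.intervalIntegrable_pow m
      exact (h1.1).mono_set Ioo_subset_Ioc_self
    have hnn : 0 ≤ᵐ[volume.restrict (Ioo 0 b)] fun t : ℝ => t ^ m :=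
      (ae_restrict_mem measurableSet_Ioo).mono fun t ht => pow_nonneg ht.1.le m
    rw [← ofReal_integral_eq_lintegral_ofReal hint hnn]
    have hval : ∫ t in Ioo (0:ℝ) b, t ^ m = b ^ (m+1) / (m+1) := by
      rw [← integral_Ioc_eq_integral_Ioo, ← intervalIntegral.integral_of_le hbnn,
        integral_pow]
      simp
    rw [hval, ENNReal.ofReal_div_of_pos (by positivity), ENNReal.ofReal_pow hbnn]
    congr 1
    · rw [hb, ENNReal.ofReal_toReal hc]
    · rw [show ((m:ℝ)+1) = ((m+1 : ℕ):ℝ) by push_cast; ring, ENNReal.ofReal_natCast]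
      push_cast
      ring

lemma volume_S {r : (Fin m → ℝ) → ℝ≥0∞} (hr : Measurable r) :
    volume (S m r) = (∫⁻ y, r y ^ (m+1)) / (m+1) := by
  have hA : MeasurableSet {p : ℝ × (Fin m → ℝ) | ENNReal.ofReal p.1 < r p.2} :=
    measurableSet_lt (ENNReal.measurable_ofReal.comp measurable_fst)
      (hr.comp measurable_snd)
  rw [Measure.volume_eq_prod, Measure.prod_apply (measurableSet_S hr)]
  -- slice computation
  have hslice : ∀ t : ℝ, (Prod.mk t ⁻¹' S m r) =
      if 0 < t then t • {y | ENNReal.ofReal t < r y} else ∅ := by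
    intro t
    split_ifs with ht
    · ext z
      simp only [mem_preimage, S, mem_setOf_eq]
      rw [mem_smul_set_iff_inv_smul_mem₀ ht.ne']
      simp [ht, mem_setOf_eq]
    · ext z
      simp only [mem_preimage, S, mem_setOf_eq, mem_empty_iff_false, iff_false]
      exact fun h => ht h.1
  have hstep1 : (∫⁻ t : ℝ, volume (Prod.mk t ⁻¹' S m r)) =
      ∫⁻ t : ℝ, (Ioi (0:ℝ)).indicator
        (fun t => ENNReal.ofReal (t ^ m) * volume {y | ENNReal.ofReal t < r y}) t := by
    congr 1
    funext t
    rw [hslice t]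
    by_cases ht : 0 < t
    · rw [if_pos ht, indicator_of_mem (mem_Ioi.mpr ht)]
      rw [Measure.addHaar_smul]
      congr 2
      rw [Module.finrank_fin_fun]
      rw [abs_of_nonneg (pow_nonneg ht.le m)]
    · rw [if_neg ht, indicator_of_notMem (by simpa using ht)]
      simp
  rw [hstep1, lintegral_indicator measurableSet_Ioi]
  -- express as double integral and swap
  have hstep2 : (∫⁻ t in Ioi (0:ℝ),
      ENNReal.ofReal (t ^ m) * volume {y | ENNReal.ofReal t < r y}) =
      ∫⁻ t in Ioi (0:ℝ), ∫⁻ y, ENNReal.ofReal (t ^ m) *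
        ({p : ℝ × (Fin m → ℝ) | ENNReal.ofReal p.1 < r p.2}.indicator 1 (t, y)) := by
    congr 1
    funext t
    have hmf : Measurable fun y : Fin m → ℝ =>
        ({p : ℝ × (Fin m → ℝ) | ENNReal.ofReal p.1 < r p.2}.indicator
          (1 : ℝ × (Fin m → ℝ) → ℝ≥0∞) (t, y)) := by
      exact (measurable_const.indicator hA).comp measurable_prodMk_left
    rw [lintegral_const_mul _ hmf]
    congr 1
    have : (fun y => ({p : ℝ × (Fin m → ℝ) | ENNReal.ofReal p.1 < r p.2}.indicator
          (1 : ℝ × (Fin m → ℝ) → ℝ≥0∞) (t, y)))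
        = (fun y => ({y : Fin m → ℝ | ENNReal.ofReal t < r y}.indicator
          (1 : (Fin m → ℝ) → ℝ≥0∞) y)) := by
      funext y
      by_cases h : ENNReal.ofReal t < r y
      · rw [indicator_of_mem (by exact h), indicator_of_mem (by exact h)]
        rfl
      · rw [indicator_of_notMem (by exact h), indicator_of_notMem (by exact h)]
    rw [this, lintegral_indicator_one (measurableSet_lt measurable_const hr)]
  rw [hstep2]
  rw [lintegral_lintegral_swap]
  swap
  · apply Measurable.aemeasurable
    apply Measurable.mul
    · exact (ENNReal.measurable_ofReal.comp ((measurable_fst).pow_const m))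
    · exact measurable_const.indicator hA
  -- inner integral
  have hstep3 : ∀ y : Fin m → ℝ, (∫⁻ t in Ioi (0:ℝ), ENNReal.ofReal (t ^ m) *
      ({p : ℝ × (Fin m → ℝ) | ENNReal.ofReal p.1 < r p.2}.indicator 1 (t, y)))
      = r y ^ (m+1) / (m+1) := by
    intro y
    rw [← inner_integral (r y)]
    congr 1
    funext t
    by_cases h : ENNReal.ofReal t < r y
    · rw [indicator_of_mem (by exact h), indicator_of_mem (by exact h)]
      simp
    · rw [indicator_of_notMem (by exact h), indicator_of_notMem (by exact h)]
      simp
  simp_rw [hstep3, div_eq_mul_inv]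
  rw [lintegral_mul_const _ (hr.pow_const (m+1))]

lemma main_ennreal (h₁ : IsCConvexRegion (m+1) Γ₁) (h₂ : IsCConvexRegion (m+1) Γ₂) :
    volume (posOrthant (m+1) \ (Γ₁ + Γ₂)) ^ (((m+1:ℕ):ℝ))⁻¹ ≤
      volume (posOrthant (m+1) \ Γ₁) ^ (((m+1:ℕ):ℝ))⁻¹ +
      volume (posOrthant (m+1) \ Γ₂) ^ (((m+1:ℕ):ℝ))⁻¹ := by
  have hm₁ := measurable_rad h₁
  have hm₂ := measurable_rad h₂
  set p : ℝ := ((m+1:ℕ):ℝ) with hpdef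
  have hp1 : (1:ℝ) ≤ p := by
    rw [hpdef]; exact_mod_cast Nat.one_le_iff_ne_zero.mpr (Nat.succ_ne_zero m)
  have hα : (0:ℝ) ≤ 1 / p := by positivity
  set N : ℝ≥0∞ := (m:ℝ≥0∞) + 1 with hNdef
  have hpow : ∀ f : (Fin m → ℝ) → ℝ≥0∞,
      (∫⁻ y, f y ^ (m+1)) / N = (∫⁻ y, f y ^ p) / N := by
    intro f
    congr 1
    congr 1
    funext y
    rw [hpdef, ENNReal.rpow_natCast]
  have hV₁ : volume (posOrthant (m+1) \ Γ₁) = (∫⁻ y, rad Γ₁ y ^ p) / N := by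
    rw [volume_compl_eq h₁, volume_S hm₁, hpow]
  have hV₂ : volume (posOrthant (m+1) \ Γ₂) = (∫⁻ y, rad Γ₂ y ^ p) / N := by
    rw [volume_compl_eq h₂, volume_S hm₂, hpow]
  have hVsum : volume (posOrthant (m+1) \ (Γ₁ + Γ₂)) ≤
      (∫⁻ y, (rad Γ₁ y + rad Γ₂ y) ^ p) / N := by
    calc volume (posOrthant (m+1) \ (Γ₁ + Γ₂))
        ≤ volume ((e m ⁻¹' S m (fun y => rad Γ₁ y + rad Γ₂ y)) ∪
            {x | x (Fin.last m) = 0}) := measure_mono (sum_subset h₁ h₂)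
      _ ≤ volume (e m ⁻¹' S m (fun y => rad Γ₁ y + rad Γ₂ y)) +
            volume {x : Fin (m+1) → ℝ | x (Fin.last m) = 0} := measure_union_le _ _
      _ = volume (S m (fun y => rad Γ₁ y + rad Γ₂ y)) := by
          rw [slab_volume, add_zero, (e_measurePreserving m).measure_preimage_equiv]
      _ = (∫⁻ y, (rad Γ₁ y + rad Γ₂ y) ^ p) / N := by
          rw [volume_S (r := fun y => rad Γ₁ y + rad Γ₂ y) (hm₁.add hm₂), hpow]
  have hMink : (∫⁻ y, (rad Γ₁ y + rad Γ₂ y) ^ p) ^ (1/p) ≤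
      (∫⁻ y, rad Γ₁ y ^ p) ^ (1/p) + (∫⁻ y, rad Γ₂ y ^ p) ^ (1/p) := by
    have h := ENNReal.lintegral_Lp_add_le (μ := volume) hm₁.aemeasurable hm₂.aemeasurable hp1
    simpa [Pi.add_apply] using h
  have hexp : (((m+1:ℕ):ℝ))⁻¹ = 1 / p := by rw [hpdef, one_div]
  rw [hexp, hV₁, hV₂]
  calc volume (posOrthant (m+1) \ (Γ₁ + Γ₂)) ^ (1/p)
      ≤ ((∫⁻ y, (rad Γ₁ y + rad Γ₂ y) ^ p) / N) ^ (1/p) :=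
        ENNReal.rpow_le_rpow hVsum hα
    _ = (∫⁻ y, (rad Γ₁ y + rad Γ₂ y) ^ p) ^ (1/p) * (N⁻¹) ^ (1/p) := by
        rw [div_eq_mul_inv, ENNReal.mul_rpow_of_nonneg _ _ hα]
    _ ≤ ((∫⁻ y, rad Γ₁ y ^ p) ^ (1/p) + (∫⁻ y, rad Γ₂ y ^ p) ^ (1/p)) * (N⁻¹) ^ (1/p) :=
        mul_le_mul_left hMink _
    _ = ((∫⁻ y, rad Γ₁ y ^ p) / N) ^ (1/p) + ((∫⁻ y, rad Γ₂ y ^ p) / N) ^ (1/p) := by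
        rw [add_mul, ← ENNReal.mul_rpow_of_nonneg _ _ hα, ← ENNReal.mul_rpow_of_nonneg _ _ hα,
          ← div_eq_mul_inv, ← div_eq_mul_inv]

end RBM

theorem reversed_brunn_minkowski_covolumes'
    (n : ℕ) (hn : 1 ≤ n) (Γ₁ Γ₂ : Set (Fin n → ℝ))
    (h₁conv : IsCConvexRegion n Γ₁) (h₂conv : IsCConvexRegion n Γ₂)
    (h₁cof : volume (posOrthant n \ Γ₁) < ⊤) (h₂cof : volume (posOrthant n \ Γ₂) < ⊤) :
    (volume (posOrthant n \ (Γ₁ + Γ₂))).toReal ^ ((n : ℝ)⁻¹) ≤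
      (volume (posOrthant n \ Γ₁)).toReal ^ ((n : ℝ)⁻¹) +
      (volume (posOrthant n \ Γ₂)).toReal ^ ((n : ℝ)⁻¹) := by
  obtain ⟨m, rfl⟩ : ∃ m, n = m + 1 := ⟨n - 1, (Nat.succ_pred_eq_of_pos hn).symm⟩
  have key := RBM.main_ennreal h₁conv h₂conv
  have hαnn : (0:ℝ) ≤ (((m+1:ℕ):ℝ))⁻¹ := by positivity
  have hne₁ : volume (posOrthant (m+1) \ Γ₁) ^ (((m+1:ℕ):ℝ))⁻¹ ≠ ⊤ :=
    ENNReal.rpow_ne_top_of_nonneg hαnn h₁cof.ne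
  have hne₂ : volume (posOrthant (m+1) \ Γ₂) ^ (((m+1:ℕ):ℝ))⁻¹ ≠ ⊤ :=
    ENNReal.rpow_ne_top_of_nonneg hαnn h₂cof.ne
  rw [ENNReal.toReal_rpow, ENNReal.toReal_rpow, ENNReal.toReal_rpow]
  calc (volume (posOrthant (m+1) \ (Γ₁ + Γ₂)) ^ (((m+1:ℕ):ℝ))⁻¹).toReal
      ≤ (volume (posOrthant (m+1) \ Γ₁) ^ (((m+1:ℕ):ℝ))⁻¹ +
          volume (posOrthant (m+1) \ Γ₂) ^ (((m+1:ℕ):ℝ))⁻¹).toReal :=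
        ENNReal.toReal_mono (ENNReal.add_ne_top.mpr ⟨hne₁, hne₂⟩) key
    _ = _ := ENNReal.toReal_add hne₁ hne₂

/-- The reversed (complemented) Brunn–Minkowski inequality for covolumes:
`Covol(Γ₁ + Γ₂)^{1/n} ≤ Covol(Γ₁)^{1/n} + Covol(Γ₂)^{1/n}`. -/
theorem reversed_brunn_minkowski_covolumes
    (n : ℕ) (hn : 1 ≤ n) (Γ₁ Γ₂ : Set (Fin n → ℝ))
    (h₁conv : IsCConvexRegion n Γ₁) (h₂conv : IsCConvexRegion n Γ₂)
    (h₁cof : IsCofinite n Γ₁) (h₂cof : IsCofinite n Γ₂) :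
    covol n (Γ₁ + Γ₂) ^ ((n : ℝ)⁻¹) ≤
      covol n Γ₁ ^ ((n : ℝ)⁻¹) + covol n Γ₂ ^ ((n : ℝ)⁻¹) :=
  reversed_brunn_minkowski_covolumes' n hn Γ₁ Γ₂ h₁conv h₂conv h₁cof h₂cof
end
end
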